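/- The derived truth table of φ ⇒ ψ := (φ → ψ) ∧ (¬ψ → ¬φ) in LP+cmi coincides with the RM3 conditional: it gives F when (φ,ψ) is (T,B), (T,F), or (B,F), B when (φ,ψ) is (B,B), and T otherwise. -/
import Mathlib


/-- Truth values of LP: T, B, F with T and B designated. -/
inductive LP : Type | T | B | F
deriving DecidableEq

namespace LP

/-- Negation: swaps T and F, fixes B. -/
def neg : LP → LP | T => F | F => T | B => B

/-- Conjunction: meet w.r.t. F < B < T. -/
def and : LP → LP → LP
  | T, y => y | x, T => x
  | F, _ => F | _, F => F
  | B, B => B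

/-- Disjunction: join w.r.t. F < B < T. -/
def or : LP → LP → LP
  | F, y => y | x, F => x
  | T, _ => T | _, T => T
  | B, B => B

/-- The cmi conditional restricted to LP: the consequent's value if the
antecedent is T or B, and T if the antecedent is F. -/
def cmi : LP → LP → LP
  | T, y => y | B, y => y
  | F, _ => T

/-- The contraposed conditional ⇒: (x → y) ∧ (¬y → ¬x). -/
def darr (x y : LP) : LP := LP.and (cmi x y) (cmi (neg y) (neg x))

/-- Designated values of LP: T and B. -/
def designated (x : LP) : Prop := x = T ∨ x = B

end LP

/-- The RM3 conditional, by its standard table. -/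
def LP.rm3 : LP → LP → LP
  | LP.T, LP.B => LP.F
  | LP.T, LP.F => LP.F
  | LP.B, LP.F => LP.F
  | LP.B, LP.B => LP.B
  | _, _ => LP.T

/-- In LP+cmi, the contraposed conditional ⇒ coincides with the RM3 conditional. -/
theorem lp_darr_eq_rm3 (x y : LP) : LP.darr x y = LP.rm3 x y := by cases x <;> cases y <;> rfl
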